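/- arXiv:1806.00592 — 4 statements merged into one kernel-verified Lean document; each statement's English description precedes it below -/
import Mathlib

section
/- Let H be an r-uniform hypergraph (every edge has exactly r vertices, r ≥ 2) whose Berge girth is at least κ+1, i.e., H contains no Berge cycle with at most κ hyperedges. Then H satisfies the (κr−κ, κ)-condition: no set of κ(r−1) vertices contains κ or more hyperedges. Equivalently, any κ distinct hyperedges of H together span at least κ(r−1)+1 vertices. -/
/-- `IsBergeCycle E b e v` says that `(e 0, v 0, e 1, v 1, …, e (b-1), v (b-1))` is a
Berge cycle with `b` hyperedges in the hypergraph with edge collection `E`: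
the hyperedges `e i ∈ E` are pairwise distinct, the vertices `v i` are pairwise
distinct, `b ≥ 2`, and `v i ∈ e i ∩ e (i+1)` cyclically. -/
def IsBergeCycle {V : Type*} (E : Finset (Finset V)) (b : ℕ)
    (e : ZMod b → Finset V) (v : ZMod b → V) : Prop :=
  2 ≤ b ∧ Function.Injective e ∧ Function.Injective v ∧
    (∀ i, e i ∈ E) ∧ (∀ i, v i ∈ e i ∧ v i ∈ e (i + 1))

/-- The hypergraph with edge collection `E` has some Berge cycle with `b` hyperedges. -/
def HasBergeCycle {V : Type*} (E : Finset (Finset V)) (b : ℕ) : Prop :=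
  ∃ e v, IsBergeCycle E b e v

/-- Key lemma: if a nonempty collection `T` of hyperedges and a vertex set `X`
have many incidences (at least `|X| + |T|`), then there is a Berge cycle with
at most `|T|` hyperedges. -/
lemma key_lemma {V : Type*} [DecidableEq V] (E : Finset (Finset V)) :
    ∀ n : ℕ, ∀ (T : Finset (Finset V)) (X : Finset V), T.card + X.card ≤ n → T ⊆ E →
      T.Nonempty → X.card + T.card ≤ ∑ x ∈ X, (T.filter (fun e => x ∈ e)).card →
      ∃ b, 2 ≤ b ∧ b ≤ T.card ∧ HasBergeCycle E b := by
  classical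
  intro n
  induction n with
  | zero =>
    intro T X hn _ hT _
    have := Finset.card_pos.mpr hT
    omega
  | succ n IH =>
    intro T X hn hTE hT hsum
    by_cases h1 : ∃ x ∈ X, (T.filter (fun e => x ∈ e)).card ≤ 1
    · -- delete a vertex of degree ≤ 1
      obtain ⟨x, hxX, hdx⟩ := h1
      have hsplit : (T.filter (fun e => x ∈ e)).card
          + ∑ y ∈ X.erase x, (T.filter (fun e => y ∈ e)).card
          = ∑ y ∈ X, (T.filter (fun e => y ∈ e)).card :=
        Finset.add_sum_erase X (fun y => (T.filter (fun e => y ∈ e)).card) hxX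
      have hcard := Finset.card_erase_of_mem hxX
      have hX1 : 1 ≤ X.card := Finset.card_pos.mpr ⟨x, hxX⟩
      exact IH T (X.erase x) (by omega) hTE hT (by omega)
    · by_cases h2 : ∃ e ∈ T, (e ∩ X).card ≤ 1
      · -- delete an edge meeting X in ≤ 1 vertex
        obtain ⟨e0, he0T, he0⟩ := h2
        have hT2 : 2 ≤ T.card := by
          by_contra h
          have hT1 : T.card = 1 := by have := Finset.card_pos.mpr hT; omega
          have hle : ∀ x ∈ X, (T.filter (fun e => x ∈ e)).card ≤ 1 := fun x _ =>
            le_trans (Finset.card_filter_le _ _) (le_of_eq hT1)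
          have hsum2 : ∑ x ∈ X, (T.filter (fun e => x ∈ e)).card ≤ ∑ x ∈ X, 1 :=
            Finset.sum_le_sum hle
          have hone : ∑ x ∈ X, 1 = X.card := by simp
          omega
        have hkey : ∀ x ∈ X, (T.filter (fun e => x ∈ e)).card
            = ((T.erase e0).filter (fun e => x ∈ e)).card + (if x ∈ e0 then 1 else 0) := by
          intro x _
          by_cases hxe : x ∈ e0
          · have hmem : e0 ∈ T.filter (fun e => x ∈ e) := Finset.mem_filter.mpr ⟨he0T, hxe⟩
            rw [Finset.filter_erase, Finset.card_erase_of_mem hmem, if_pos hxe]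
            have := Finset.card_pos.mpr ⟨e0, hmem⟩
            omega
          · have hnm : e0 ∉ T.filter (fun e => x ∈ e) :=
              fun h => hxe (Finset.mem_filter.mp h).2
            rw [Finset.filter_erase, Finset.erase_eq_of_notMem hnm, if_neg hxe]
            omega
        have hsum3 : ∑ x ∈ X, (T.filter (fun e => x ∈ e)).card
            = ∑ x ∈ X, ((T.erase e0).filter (fun e => x ∈ e)).card
              + ∑ x ∈ X, (if x ∈ e0 then 1 else 0) := by
          rw [← Finset.sum_add_distrib]; exact Finset.sum_congr rfl hkey
        have hind : ∑ x ∈ X, (if x ∈ e0 then (1 : ℕ) else 0) ≤ 1 := by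
          rw [← Finset.card_filter, Finset.filter_mem_eq_inter, Finset.inter_comm]
          exact he0
        have hecard := Finset.card_erase_of_mem he0T
        have hT'ne : (T.erase e0).Nonempty := by
          rw [← Finset.card_pos]; omega
        obtain ⟨b, hb1, hb2, hb3⟩ := IH (T.erase e0) X (by omega)
          (fun e he => hTE (Finset.mem_of_mem_erase he)) hT'ne (by omega)
        exact ⟨b, hb1, le_trans hb2 (Finset.card_le_card (Finset.erase_subset _ _)), hb3⟩
      · -- minimum degree ≥ 2 on both sides: build a non-backtracking walk
        push_neg at h1 h2
        obtain ⟨E0, hE0⟩ := hT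
        have hx0' : (E0 ∩ X).Nonempty := Finset.card_pos.mp (by have := h2 E0 hE0; omega)
        obtain ⟨x0, hx0⟩ := hx0'
        have hp0 : (E0, x0).1 ∈ T ∧ (E0, x0).2 ∈ (E0, x0).1 ∧ (E0, x0).2 ∈ X :=
          ⟨hE0, (Finset.mem_inter.mp hx0).1, (Finset.mem_inter.mp hx0).2⟩
        have hstepex : ∀ q : Finset V × V, q.1 ∈ T → q.2 ∈ q.1 → q.2 ∈ X →
            ∃ q' : Finset V × V, (q'.1 ∈ T ∧ q'.2 ∈ q'.1 ∧ q'.2 ∈ X) ∧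
              q'.1 ≠ q.1 ∧ q.2 ∈ q'.1 ∧ q'.2 ≠ q.2 := by
          rintro ⟨e, x⟩ hpe hpx hpX
          obtain ⟨e', he', hne⟩ := Finset.exists_mem_ne (h1 x hpX) e
          have he'T := (Finset.mem_filter.mp he').1
          have hxe' := (Finset.mem_filter.mp he').2
          obtain ⟨x', hx', hxne⟩ := Finset.exists_mem_ne (h2 e' he'T) x
          exact ⟨(e', x'), ⟨he'T, (Finset.mem_inter.mp hx').1, (Finset.mem_inter.mp hx').2⟩,
            hne, hxe', hxne⟩
        choose! step hstep1 hstep2 hstep3 hstep4 using hstepex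
        set p : ℕ → Finset V × V := fun n => step^[n] (E0, x0) with hp
        have hps : ∀ n, p (n + 1) = step (p n) := fun n => Function.iterate_succ_apply' step n _
        have hPp : ∀ n, (p n).1 ∈ T ∧ (p n).2 ∈ (p n).1 ∧ (p n).2 ∈ X := by
          intro n
          induction n with
          | zero => exact hp0
          | succ n ih => rw [hps]; exact hstep1 _ ih.1 ih.2.1 ih.2.2
        set ee : ℕ → Finset V := fun n => (p n).1 with hee
        set vv : ℕ → V := fun n => (p n).2 with hvv
        have hA : ∀ n, ee (n + 1) ≠ ee n := by
          intro n
          show (p (n + 1)).1 ≠ (p n).1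
          rw [hps]
          exact hstep2 _ (hPp n).1 (hPp n).2.1 (hPp n).2.2
        have hB : ∀ n, vv n ∈ ee (n + 1) := by
          intro n
          show (p n).2 ∈ (p (n + 1)).1
          rw [hps]
          exact hstep3 _ (hPp n).1 (hPp n).2.1 (hPp n).2.2
        have hC : ∀ n, vv (n + 1) ≠ vv n := by
          intro n
          show (p (n + 1)).2 ≠ (p n).2
          rw [hps]
          exact hstep4 _ (hPp n).1 (hPp n).2.1 (hPp n).2.2
        have hPn : ∀ n, ee n ∈ T ∧ vv n ∈ ee n ∧ vv n ∈ X := hPp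
        set w : ℕ → Finset V ⊕ V :=
          fun m => if Even m then Sum.inl (ee (m / 2)) else Sum.inr (vv (m / 2)) with hw
        have hwe : ∀ k, w (2 * k) = Sum.inl (ee k) := by
          intro k
          have h' : Even (2 * k) := ⟨k, by ring⟩
          have hk2 : 2 * k / 2 = k := by omega
          simp only [hw, if_pos h', hk2]
        have hwo : ∀ k, w (2 * k + 1) = Sum.inr (vv k) := by
          intro k
          have h' : ¬ Even (2 * k + 1) := by
            simp [Nat.even_add_one, parity_simps]
          have hk2 : (2 * k + 1) / 2 = k := by omega
          simp only [hw, if_neg h', hk2]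
        -- pigeonhole: some value repeats
        have hmaps : ∀ m ∈ Finset.range (T.card + X.card + 1), w m ∈ T.disjSum X := by
          intro m _
          by_cases hm : Even m
          · simp only [hw, if_pos hm]
            exact Finset.inl_mem_disjSum.mpr (hPn _).1
          · simp only [hw, if_neg hm]
            exact Finset.inr_mem_disjSum.mpr (hPn _).2.2
        have hltc : (T.disjSum X).card < (Finset.range (T.card + X.card + 1)).card := by
          rw [Finset.card_disjSum, Finset.card_range]
          omega
        obtain ⟨a, -, c, -, hac, hwac⟩ :=
          Finset.exists_ne_map_eq_of_card_lt_of_maps_to hltc hmaps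
        have hex : ∃ m, ∃ l, l < m ∧ w l = w m := by
          rcases Nat.lt_or_ge a c with h | h
          · exact ⟨c, a, h, hwac⟩
          · exact ⟨a, c, by omega, hwac.symm⟩
        set j := Nat.find hex with hj
        obtain ⟨i, hij, hwij⟩ : ∃ l, l < j ∧ w l = w j := Nat.find_spec hex
        have hminj : ∀ a b, a < j → b < j → w a = w b → a = b := by
          intro a b ha hb hweq
          by_contra hne
          rcases Nat.lt_or_ge a b with h | h
          · exact Nat.find_min hex hb ⟨a, h, hweq⟩
          · exact Nat.find_min hex ha ⟨b, by omega, hweq.symm⟩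
        rcases Nat.even_or_odd i with hi | hi
        · -- i even
          obtain ⟨s, hs⟩ := hi
          have hi2 : i = 2 * s := by omega
          obtain ⟨t, ht⟩ : ∃ t, j = 2 * t := by
            rcases Nat.even_or_odd j with ⟨t, ht'⟩ | ⟨t, ht'⟩
            · exact ⟨t, by omega⟩
            · rw [hi2, show j = 2 * t + 1 from ht', hwe, hwo] at hwij
              exact absurd hwij (by simp)
          rw [hi2, ht, hwe, hwe] at hwij
          have hwrap : ee t = ee s := (Sum.inl.inj hwij).symm
          have hst2 : s + 2 ≤ t := by
            by_contra h
            have ht1 : t = s + 1 := by omega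
            exact hA s (by rw [← ht1]; exact hwrap)
          set b := t - s with hbdef
          have hb2 : 2 ≤ b := by omega
          haveI : NeZero b := ⟨by omega⟩
          haveI : Fact (1 < b) := ⟨by omega⟩
          set eF : ZMod b → Finset V := fun k => ee (s + k.val) with heF
          set vF : ZMod b → V := fun k => vv (s + k.val) with hvF
          have hval : ∀ k : ZMod b, k.val < b := fun k => ZMod.val_lt k
          have heinj : Function.Injective eF := by
            intro k k' h
            have hww : w (2 * (s + k.val)) = w (2 * (s + k'.val)) := by
              rw [hwe, hwe]; exact congrArg Sum.inl h
            have h1' := hval k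
            have h2' := hval k'
            have := hminj _ _ (by omega) (by omega) hww
            exact ZMod.val_injective b (by omega)
          have hvinj : Function.Injective vF := by
            intro k k' h
            have hww : w (2 * (s + k.val) + 1) = w (2 * (s + k'.val) + 1) := by
              rw [hwo, hwo]; exact congrArg Sum.inr h
            have h1' := hval k
            have h2' := hval k'
            have := hminj _ _ (by omega) (by omega) hww
            exact ZMod.val_injective b (by omega)
          have hmem : ∀ k : ZMod b, vF k ∈ eF k ∧ vF k ∈ eF (k + 1) := by
            intro k
            refine ⟨(hPn _).2.1, ?_⟩
            have hv1 : (k + 1).val = (k.val + 1) % b := by rw [ZMod.val_add, ZMod.val_one]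
            show vv (s + k.val) ∈ ee (s + (k + 1).val)
            by_cases hk : k.val + 1 < b
            · rw [hv1, Nat.mod_eq_of_lt hk, show s + (k.val + 1) = (s + k.val) + 1 from by omega]
              exact hB _
            · have hkb : k.val + 1 = b := by have := hval k; omega
              rw [hv1, hkb, Nat.mod_self, Nat.add_zero, ← hwrap,
                show t = (s + k.val) + 1 from by omega]
              exact hB _
          have hble : b ≤ T.card := by
            have hc := Finset.card_le_card_of_injOn (s := Finset.univ) eF
              (fun k _ => (hPn (s + k.val)).1) (heinj.injOn)
            simpa [ZMod.card] using hc
          refine ⟨b, hb2, hble, eF, vF, hb2, heinj, hvinj,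
            fun k => hTE (hPn (s + k.val)).1, hmem⟩
        · -- i odd
          obtain ⟨s, hs⟩ := hi
          obtain ⟨t, ht⟩ : ∃ t, j = 2 * t + 1 := by
            rcases Nat.even_or_odd j with ⟨t, ht'⟩ | ⟨t, ht'⟩
            · rw [hs, show j = 2 * t from by omega, hwo, hwe] at hwij
              exact absurd hwij (by simp)
            · exact ⟨t, ht'⟩
          rw [hs, ht, hwo, hwo] at hwij
          have hwrap : vv t = vv s := (Sum.inr.inj hwij).symm
          have hst2 : s + 2 ≤ t := by
            by_contra h
            have ht1 : t = s + 1 := by omega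
            exact hC s (by rw [← ht1]; exact hwrap)
          set b := t - s with hbdef
          have hb2 : 2 ≤ b := by omega
          haveI : NeZero b := ⟨by omega⟩
          haveI : Fact (1 < b) := ⟨by omega⟩
          set eF : ZMod b → Finset V := fun k => ee (s + 1 + k.val) with heF
          set vF : ZMod b → V := fun k => vv (s + 1 + k.val) with hvF
          have hval : ∀ k : ZMod b, k.val < b := fun k => ZMod.val_lt k
          have heinj : Function.Injective eF := by
            intro k k' h
            have hww : w (2 * (s + 1 + k.val)) = w (2 * (s + 1 + k'.val)) := by
              rw [hwe, hwe]; exact congrArg Sum.inl h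
            have h1' := hval k
            have h2' := hval k'
            have := hminj _ _ (by omega) (by omega) hww
            exact ZMod.val_injective b (by omega)
          -- the w-index representing vv (s+1+m) for m < b
          have hidx : ∀ m, m < b →
              w (if m = b - 1 then i else 2 * (s + 1 + m) + 1) = Sum.inr (vv (s + 1 + m)) := by
            intro m hm
            by_cases hmb : m = b - 1
            · rw [if_pos hmb, hs, hwo,
                show s + 1 + m = t from by omega, hwrap]
            · rw [if_neg hmb, hwo]
          have hidxlt : ∀ m, m < b → (if m = b - 1 then i else 2 * (s + 1 + m) + 1) < j := by
            intro m hm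
            by_cases hmb : m = b - 1
            · rw [if_pos hmb]; exact hij
            · rw [if_neg hmb]; omega
          have hvinj : Function.Injective vF := by
            intro k k' h
            have h1' := hval k
            have h2' := hval k'
            have hww : w (if k.val = b - 1 then i else 2 * (s + 1 + k.val) + 1)
                = w (if k'.val = b - 1 then i else 2 * (s + 1 + k'.val) + 1) := by
              rw [hidx _ h1', hidx _ h2']
              exact congrArg Sum.inr h
            have := hminj _ _ (hidxlt _ h1') (hidxlt _ h2') hww
            apply ZMod.val_injective b
            by_cases ha1 : k.val = b - 1 <;> by_cases ha2 : k'.val = b - 1 <;>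
              simp only [ha1, ha2, if_pos, if_neg, if_true, if_false] at this <;> omega
          have hmem : ∀ k : ZMod b, vF k ∈ eF k ∧ vF k ∈ eF (k + 1) := by
            intro k
            refine ⟨(hPn _).2.1, ?_⟩
            have hv1 : (k + 1).val = (k.val + 1) % b := by rw [ZMod.val_add, ZMod.val_one]
            show vv (s + 1 + k.val) ∈ ee (s + 1 + (k + 1).val)
            by_cases hk : k.val + 1 < b
            · rw [hv1, Nat.mod_eq_of_lt hk,
                show s + 1 + (k.val + 1) = (s + 1 + k.val) + 1 from by omega]
              exact hB _
            · have hkb : k.val + 1 = b := by have := hval k; omega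
              rw [hv1, hkb, Nat.mod_self, Nat.add_zero,
                show s + 1 + k.val = t from by omega, hwrap]
              exact hB s
          have hble : b ≤ T.card := by
            have hc := Finset.card_le_card_of_injOn (s := Finset.univ) eF
              (fun k _ => (hPn (s + 1 + k.val)).1) (heinj.injOn)
            simpa [ZMod.card] using hc
          refine ⟨b, hb2, hble, eF, vF, hb2, heinj, hvinj,
            fun k => hTE (hPn (s + 1 + k.val)).1, hmem⟩

/-- An `r`-uniform hypergraph of Berge girth at least `κ + 1` (i.e. with no Berge cycle
on at most `κ` hyperedges) satisfies the `(κr - κ, κ)`-condition: no set of `κ(r-1)`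
vertices contains `κ` or more hyperedges. Equivalently, any `κ` distinct hyperedges
together span at least `κ(r-1) + 1` vertices. -/
theorem girth_implies_condition {V : Type*} [Fintype V] [DecidableEq V]
    (E : Finset (Finset V)) (r κ : ℕ) (hr : 2 ≤ r) (hκ : 2 ≤ κ)
    (hunif : ∀ e ∈ E, e.card = r)
    (hgirth : ∀ b ≤ κ, ¬ HasBergeCycle E b) :
    (∀ W : Finset V, W.card = κ * (r - 1) →
        (E.filter (fun e => e ⊆ W)).card < κ) ∧
    (∀ S ⊆ E, S.card = κ → κ * (r - 1) + 1 ≤ (S.biUnion id).card) := by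
  classical
  have part2 : ∀ S ⊆ E, S.card = κ → κ * (r - 1) + 1 ≤ (S.biUnion id).card := by
    intro S hSE hScard
    by_contra hcon
    push_neg at hcon
    set X := S.biUnion id with hX
    have hsub : ∀ e ∈ S, e ⊆ X := fun e he x hx => Finset.mem_biUnion.mpr ⟨e, he, hx⟩
    have hdc : ∑ x ∈ X, (S.filter (fun e => x ∈ e)).card = S.card * r := by
      calc ∑ x ∈ X, (S.filter (fun e => x ∈ e)).card
          = ∑ x ∈ X, ∑ e ∈ S, (if x ∈ e then 1 else 0) := by
            simp only [Finset.card_filter]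
        _ = ∑ e ∈ S, ∑ x ∈ X, (if x ∈ e then 1 else 0) := Finset.sum_comm
        _ = ∑ e ∈ S, (X.filter (fun x => x ∈ e)).card := by
            simp only [Finset.card_filter]
        _ = ∑ e ∈ S, r := Finset.sum_congr rfl (fun e he => by
            rw [Finset.filter_mem_eq_inter, Finset.inter_eq_right.mpr (hsub e he)]
            exact hunif e (hSE he))
        _ = S.card * r := by rw [Finset.sum_const, smul_eq_mul]
    have hSne : S.Nonempty := Finset.card_pos.mp (by omega)
    have hmul : κ * (r - 1) + κ = κ * r := by
      cases r with
      | zero => omega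
      | succ r' => simp [Nat.mul_succ]
    have hineq : X.card + S.card ≤ ∑ x ∈ X, (S.filter (fun e => x ∈ e)).card := by
      rw [hdc, hScard]
      omega
    obtain ⟨b, hb2, hble, hcyc⟩ := key_lemma E (S.card + X.card) S X le_rfl hSE hSne hineq
    exact hgirth b (by omega) hcyc
  refine ⟨?_, part2⟩
  intro W hW
  by_contra hcon
  push_neg at hcon
  obtain ⟨S, hSsub, hScard⟩ := Finset.exists_subset_card_eq hcon
  have hSE : S ⊆ E := hSsub.trans (Finset.filter_subset _ _)
  have h2 := part2 S hSE hScard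
  have hXW : S.biUnion id ⊆ W := by
    intro x hx
    obtain ⟨e, heS, hxe⟩ := Finset.mem_biUnion.mp hx
    exact (Finset.mem_filter.mp (hSsub heS)).2 hxe
  have := Finset.card_le_card hXW
  omega
end

section
/- The number of blocks in a 2-(η, r, 1) packing design is at most ⌊(η/r)·⌊(η−1)/(r−1)⌋⌋ (first Johnson bound); in particular it is at most η(η−1)/(r(r−1)). -/
/-- **First Johnson bound** for packing designs: a `2-(η, r, 1)` packing design (a family
of `r`-element blocks of an `η`-element point set, `η ≥ r ≥ 2`, in which every pair of
distinct points lies in at most one block) has at most `⌊(η/r)·⌊(η-1)/(r-1)⌋⌋` blocks;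
in particular it has at most `η(η-1)/(r(r-1))` blocks. -/
theorem johnson_bound {V : Type*} [Fintype V] [DecidableEq V]
    (E : Finset (Finset V)) (r η : ℕ) (hr : 2 ≤ r) (hrη : r ≤ η)
    (hη : Fintype.card V = η)
    (hunif : ∀ e ∈ E, e.card = r)
    (hpack : ∀ v w : V, v ≠ w → (E.filter (fun e => v ∈ e ∧ w ∈ e)).card ≤ 1) :
    E.card ≤ η * ((η - 1) / (r - 1)) / r ∧
    (E.card : ℚ) ≤ (η * (η - 1) : ℚ) / (r * (r - 1)) := by
  have hr1 : 0 < r - 1 := by omega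
  have hr0 : 0 < r := by omega
  -- degree bound
  have hdeg : ∀ v : V, (E.filter (fun e => v ∈ e)).card * (r - 1) ≤ η - 1 := by
    intro v
    have hdisj : ∀ e ∈ E.filter (fun e => v ∈ e), ∀ f ∈ E.filter (fun e => v ∈ e),
        e ≠ f → Disjoint (e.erase v) (f.erase v) := by
      intro e he f hf hef
      simp only [Finset.mem_filter] at he hf
      rw [Finset.disjoint_left]
      intro w hwe hwf
      have hwv : w ≠ v := Finset.ne_of_mem_erase hwe
      have h2 : 2 ≤ (E.filter (fun e => v ∈ e ∧ w ∈ e)).card := by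
        have hsub : {e, f} ⊆ E.filter (fun e => v ∈ e ∧ w ∈ e) := by
          intro x hx
          simp only [Finset.mem_insert, Finset.mem_singleton] at hx
          rcases hx with rfl | rfl <;> simp [Finset.mem_filter, he.1, he.2, hf.1, hf.2,
            Finset.mem_of_mem_erase hwe, Finset.mem_of_mem_erase hwf]
        calc 2 = ({e, f} : Finset (Finset V)).card := by
              rw [Finset.card_insert_of_notMem (by simpa using hef), Finset.card_singleton]
          _ ≤ _ := Finset.card_le_card hsub
      have := hpack v w (Ne.symm hwv)
      omega
    have hsub : (E.filter (fun e => v ∈ e)).biUnion (fun e => e.erase v) ⊆ Finset.univ.erase v := by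
      intro w hw
      simp only [Finset.mem_biUnion] at hw
      obtain ⟨e, _, hwe⟩ := hw
      exact Finset.mem_erase.mpr ⟨Finset.ne_of_mem_erase hwe, Finset.mem_univ w⟩
    have hcard := Finset.card_le_card hsub
    rw [Finset.card_biUnion hdisj] at hcard
    have hcard' : ∑ e ∈ E.filter (fun e => v ∈ e), (e.erase v).card
        = (E.filter (fun e => v ∈ e)).card * (r - 1) := by
      rw [Finset.sum_congr rfl (fun e he => ?_), Finset.sum_const, smul_eq_mul]
      simp only [Finset.mem_filter] at he
      rw [Finset.card_erase_of_mem he.2, hunif e he.1]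
    rw [hcard'] at hcard
    calc _ ≤ (Finset.univ.erase v).card := hcard
      _ = η - 1 := by rw [Finset.card_erase_of_mem (Finset.mem_univ v), Finset.card_univ, hη]
  -- double counting
  have hsum : ∑ v : V, (E.filter (fun e => v ∈ e)).card = E.card * r := by
    simp only [Finset.card_filter]
    rw [Finset.sum_comm]
    rw [Finset.sum_congr rfl (fun e he => ?_), Finset.sum_const, smul_eq_mul]
    rw [← Finset.card_filter]
    have : Finset.univ.filter (fun v => v ∈ e) = e := by
      ext x; simp
    rw [this, hunif e he]
  have key : E.card * r ≤ η * ((η - 1) / (r - 1)) := by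
    rw [← hsum]
    calc ∑ v : V, (E.filter (fun e => v ∈ e)).card
        ≤ ∑ _v : V, ((η - 1) / (r - 1)) := by
          refine Finset.sum_le_sum fun v _ => ?_
          exact (Nat.le_div_iff_mul_le hr1).mpr (hdeg v)
      _ = η * ((η - 1) / (r - 1)) := by
          rw [Finset.sum_const, smul_eq_mul, Finset.card_univ, hη]
  constructor
  · exact (Nat.le_div_iff_mul_le hr0).mpr key
  · have key2 : E.card * (r * (r - 1)) ≤ η * (η - 1) := by
      calc E.card * (r * (r - 1)) = E.card * r * (r - 1) := by ring
        _ ≤ η * ((η - 1) / (r - 1)) * (r - 1) := Nat.mul_le_mul_right _ key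
        _ = η * ((η - 1) / (r - 1) * (r - 1)) := by ring
        _ ≤ η * (η - 1) := Nat.mul_le_mul_left _ (Nat.div_mul_le_self _ _)
    have hc : (E.card : ℚ) * (r * (r - 1)) ≤ (η : ℚ) * (η - 1) := by
      have := (Nat.cast_le (α := ℚ)).mpr key2
      push_cast [Nat.cast_sub (by omega : 1 ≤ r), Nat.cast_sub (by omega : 1 ≤ η)] at this
      convert this using 1
    have hpos : (0 : ℚ) < (r : ℚ) * ((r : ℚ) - 1) := by
      have : (2 : ℚ) ≤ (r : ℚ) := by exact_mod_cast hr
      nlinarith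
    rw [le_div_iff₀ hpos]
    linarith [hc]
end

section
/- Let G be a bipartite graph with left part A of size k and right part B of size ρ, such that every vertex of A has degree at least 2 and G has girth at least 8 (no cycles of length 4 or 6). Then ρ ≥ 2√k, equivalently k ≤ ρ²/4. -/
/-!
Choose for every `a ∈ A` two neighbours `p a ≠ q a` in `B` and read `a` as the edge
`s(p a, q a)` of a graph on `B`. A 4-cycle-free `G` yields distinct edges for distinct `a`, so
this graph has at least `k` edges, and a 6-cycle-free `G` makes it triangle-free. Mantel's
theorem then bounds its number of edges by `ρ² / 4`.
-/

open Finset SimpleGraph Sum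

namespace SimpleGraph

theorem CliqueFree.four_mul_card_edgeFinset_le {V : Type*} [Fintype V] {H : SimpleGraph V}
    [DecidableRel H.Adj] (hH : H.CliqueFree 3) : 4 * #H.edgeFinset ≤ Fintype.card V ^ 2 := by
  have h := CliqueFree.card_edgeFinset_le (r := 2) hH
  have hmod : (Fintype.card V % 2).choose 2 = 0 := Nat.choose_eq_zero_of_lt (Nat.mod_lt _ two_pos)
  simp only [hmod] at h
  omega

variable {A B : Type*} {G : SimpleGraph (A ⊕ B)}

theorem eq_of_adj_of_adj_of_four_lt_girth (hG : 4 < G.girth) {a a' : A} {x y : B} (hxy : x ≠ y)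
    (hax : G.Adj (inl a) (inr x)) (hay : G.Adj (inl a) (inr y))
    (ha'x : G.Adj (inl a') (inr x)) (ha'y : G.Adj (inl a') (inr y)) : a = a' := by
  by_contra hne
  let w : G.Walk (inl a) (inl a) := .cons hax (.cons ha'x.symm (.cons ha'y (.cons hay.symm .nil)))
  have hw : w.IsCircuit := by
    refine ⟨?_, by simp [w]⟩
    simp [w, Walk.isTrail_def, hne, hxy, Ne.symm hne]
  have := hw.girth_le_length
  simp [w] at this
  omega

theorem false_of_hexagon_of_six_lt_girth (hG : 6 < G.girth) {a₁ a₂ a₃ : A} {x y z : B}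
    (h₁₂ : a₁ ≠ a₂) (h₁₃ : a₁ ≠ a₃) (h₂₃ : a₂ ≠ a₃) (hxy : x ≠ y) (hxz : x ≠ z) (hyz : y ≠ z)
    (h₁x : G.Adj (inl a₁) (inr x)) (h₁y : G.Adj (inl a₁) (inr y))
    (h₂x : G.Adj (inl a₂) (inr x)) (h₂z : G.Adj (inl a₂) (inr z))
    (h₃y : G.Adj (inl a₃) (inr y)) (h₃z : G.Adj (inl a₃) (inr z)) : False := by
  let w : G.Walk (inl a₁) (inl a₁) :=
    .cons h₁y (.cons h₃y.symm (.cons h₃z (.cons h₂z.symm (.cons h₂x (.cons h₁x.symm .nil)))))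
  have hw : w.IsCircuit := by
    refine ⟨?_, by simp [w]⟩
    simp [w, Walk.isTrail_def, h₁₂, h₁₃, hyz, h₁₂.symm, h₁₃.symm, h₂₃.symm, hxy.symm, hxz.symm]
  have := hw.girth_le_length
  simp [w] at this
  omega

theorem exists_ne_adj_inr_of_two_le_degree {a : A} [Fintype (G.neighborSet (inl a))]
    (hbip : ∀ a', ¬ G.Adj (inl a) (inl a')) (hdeg : 2 ≤ G.degree (inl a)) :
    ∃ x y : B, x ≠ y ∧ G.Adj (inl a) (inr x) ∧ G.Adj (inl a) (inr y) := by
  have hright : ∀ u, G.Adj (inl a) u → ∃ x, u = inr x := by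
    rintro (a' | x) h
    exacts [(hbip a' h).elim, ⟨x, rfl⟩]
  rw [← card_neighborFinset_eq_degree] at hdeg
  obtain ⟨u, hu, v, hv, huv⟩ := one_lt_card.mp hdeg
  rw [mem_neighborFinset] at hu hv
  obtain ⟨x, rfl⟩ := hright u hu
  obtain ⟨y, rfl⟩ := hright v hv
  exact ⟨x, y, fun h ↦ huv (congrArg inr h), hu, hv⟩

def pairGraph (p q : A → B) : SimpleGraph B := fromEdgeSet (Set.range fun a ↦ s(p a, q a))

variable {p q : A → B}

theorem adj_of_mem_pair (hp : ∀ a, G.Adj (inl a) (inr (p a)))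
    (hq : ∀ a, G.Adj (inl a) (inr (q a))) {a : A} {x : B} (hx : x ∈ s(p a, q a)) :
    G.Adj (inl a) (inr x) := by
  rcases Sym2.mem_iff.mp hx with rfl | rfl
  exacts [hp a, hq a]

theorem injective_pair_of_four_lt_girth (hG : 4 < G.girth) (hpq : ∀ a, p a ≠ q a)
    (hp : ∀ a, G.Adj (inl a) (inr (p a))) (hq : ∀ a, G.Adj (inl a) (inr (q a))) :
    Function.Injective fun a ↦ s(p a, q a) := by
  intro a a' (h : s(p a, q a) = s(p a', q a'))
  have mem' {x : B} (hx : x ∈ s(p a, q a)) : G.Adj (inl a') (inr x) :=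
    adj_of_mem_pair hp hq (h ▸ hx)
  exact eq_of_adj_of_adj_of_four_lt_girth hG (hpq a) (hp a) (hq a)
    (mem' (Sym2.mem_mk_left _ _)) (mem' (Sym2.mem_mk_right _ _))

theorem card_le_card_edgeFinset_pairGraph [Fintype A] [Fintype B]
    [DecidableRel (pairGraph p q).Adj] (hG : 4 < G.girth) (hpq : ∀ a, p a ≠ q a)
    (hp : ∀ a, G.Adj (inl a) (inr (p a))) (hq : ∀ a, G.Adj (inl a) (inr (q a))) :
    Fintype.card A ≤ #(pairGraph p q).edgeFinset := by
  rw [← card_univ]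
  refine card_le_card_of_injOn (fun a ↦ s(p a, q a)) (fun a _ ↦ ?_)
    (injective_pair_of_four_lt_girth hG hpq hp hq).injOn
  rw [mem_coe, mem_edgeFinset, pairGraph, edgeSet_fromEdgeSet]
  exact ⟨⟨a, rfl⟩, by simpa using hpq a⟩

theorem cliqueFree_three_pairGraph (hG : 6 < G.girth)
    (hp : ∀ a, G.Adj (inl a) (inr (p a))) (hq : ∀ a, G.Adj (inl a) (inr (q a))) :
    (pairGraph p q).CliqueFree 3 := by
  classical
  intro s hs
  obtain ⟨x, y, z, hxy, hxz, hyz, -⟩ := is3Clique_iff.mp hs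
  simp only [pairGraph, fromEdgeSet_adj, Set.mem_range] at hxy hxz hyz
  obtain ⟨⟨a₁, h₁⟩, hxy⟩ := hxy
  obtain ⟨⟨a₂, h₂⟩, hxz⟩ := hxz
  obtain ⟨⟨a₃, h₃⟩, hyz⟩ := hyz
  have h₁₂ : a₁ ≠ a₂ := by rintro rfl; exact hyz (Sym2.congr_right.mp (h₁.symm.trans h₂))
  have h₁₃ : a₁ ≠ a₃ := by
    rintro rfl; exact hxz (Sym2.congr_right.mp (Sym2.eq_swap.trans (h₁.symm.trans h₃)))
  have h₂₃ : a₂ ≠ a₃ := by rintro rfl; exact hxy (Sym2.congr_left.mp (h₂.symm.trans h₃))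
  have adj {a : A} {u v w : B} (h : s(p a, q a) = s(u, v)) (hw : w ∈ s(u, v)) :
      G.Adj (inl a) (inr w) :=
    adj_of_mem_pair hp hq (h ▸ hw)
  exact false_of_hexagon_of_six_lt_girth hG h₁₂ h₁₃ h₂₃ hxy hxz hyz
    (adj h₁ (Sym2.mem_mk_left _ _)) (adj h₁ (Sym2.mem_mk_right _ _))
    (adj h₂ (Sym2.mem_mk_left _ _)) (adj h₂ (Sym2.mem_mk_right _ _))
    (adj h₃ (Sym2.mem_mk_left _ _)) (adj h₃ (Sym2.mem_mk_right _ _))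

end SimpleGraph

theorem redundancy_lower_bound_general {A B : Type*} [Fintype A] [Fintype B]
    (G : SimpleGraph (A ⊕ B)) [DecidableRel G.Adj]
    (hbipA : ∀ a a' : A, ¬ G.Adj (Sum.inl a) (Sum.inl a'))
    (hdeg : ∀ a : A, 2 ≤ G.degree (Sum.inl a))
    (hgirth : 8 ≤ G.girth) :
    2 * Real.sqrt (Fintype.card A) ≤ Fintype.card B ∧
    (Fintype.card A : ℝ) ≤ (Fintype.card B : ℝ) ^ 2 / 4 := by
  classical
  choose p q hpq hp hq using fun a ↦ exists_ne_adj_inr_of_two_le_degree (hbipA a) (hdeg a)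
  have hedges := card_le_card_edgeFinset_pairGraph (by omega) hpq hp hq
  have hmantel := (cliqueFree_three_pairGraph (by omega) hp hq).four_mul_card_edgeFinset_le
  have hkρ : 4 * (Fintype.card A : ℝ) ≤ (Fintype.card B : ℝ) ^ 2 := by
    exact_mod_cast (by omega : 4 * Fintype.card A ≤ Fintype.card B ^ 2)
  have hsqrt : √(Fintype.card A : ℝ) ≤ Fintype.card B / 2 :=
    Real.sqrt_le_iff.mpr ⟨by positivity, by linarith⟩
  exact ⟨by linarith, by linarith⟩

/-- Redundancy bound for graph-based asynchronous batch codes with `t = 3`: if `G` is a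
bipartite graph with left part `A` of size `k` and right part `B` of size `ρ`, every
vertex of `A` has degree at least `2`, and `G` has girth at least `8`, then
`ρ ≥ 2√k`, equivalently `k ≤ ρ²/4`. -/
theorem redundancy_lower_bound {A B : Type*} [Fintype A] [Fintype B]
    (G : SimpleGraph (A ⊕ B)) [DecidableRel G.Adj]
    (hbipA : ∀ a a' : A, ¬ G.Adj (Sum.inl a) (Sum.inl a'))
    (hbipB : ∀ b b' : B, ¬ G.Adj (Sum.inr b) (Sum.inr b'))
    (hdeg : ∀ a : A, 2 ≤ G.degree (Sum.inl a))
    (hgirth : 8 ≤ G.girth) :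
    2 * Real.sqrt (Fintype.card A) ≤ Fintype.card B ∧
    (Fintype.card A : ℝ) ≤ (Fintype.card B : ℝ) ^ 2 / 4 :=
  redundancy_lower_bound_general G hbipA hdeg hgirth
end

section
/- Let H be an r-uniform hypergraph on η vertices satisfying the (κr−κ, κ)-condition (no κ(r−1) vertices contain κ or more edges). Then every Berge-connected component of the subhypergraph induced by any set of edges that contains a Berge cycle on at most κ edges has strictly fewer than κ hyperedges. -/
/-- An edge set `S` is Berge-connected (as a subhypergraph) if it cannot be split into
two nonempty parts whose vertex supports are disjoint. -/
def EdgeConnected {V : Type*} [DecidableEq V] (S : Finset (Finset V)) : Prop :=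
  ∀ S1 ⊆ S, S1.Nonempty → S1 ≠ S →
    ((S1.biUnion id) ∩ ((S \ S1).biUnion id)).Nonempty

/-- Let `H` be an `r`-uniform hypergraph satisfying the `(κr-κ, κ)`-condition (no set of
`κ(r-1)` vertices contains `κ` or more edges). Then every Berge-connected component of
the subhypergraph induced by any set of edges that contains a Berge cycle on at most `κ`
edges has strictly fewer than `κ` hyperedges: here, any Berge-connected set `S` of edges
of `H` containing such a cycle satisfies `|S| < κ`. -/
theorem component_with_small_cycle_is_small {V : Type*} [Fintype V] [DecidableEq V]
    (E : Finset (Finset V)) (r κ : ℕ) (hr : 2 ≤ r) (hκ : 2 ≤ κ)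
    (hunif : ∀ e ∈ E, e.card = r)
    (hcond : ∀ W : Finset V, W.card ≤ κ * (r - 1) →
      (E.filter (fun e => e ⊆ W)).card < κ)
    (S : Finset (Finset V)) (hS : S ⊆ E)
    (hconn : EdgeConnected S)
    (hcyc : ∃ b ≤ κ, HasBergeCycle S b) :
    S.card < κ := by
  by_contra hlt
  push_neg at hlt
  obtain ⟨b, hbκ, e, v, hb2, he, hv, heS, hev⟩ := hcyc
  haveI : NeZero b := ⟨by omega⟩
  haveI : Fact (1 < b) := ⟨by omega⟩
  set T0 : Finset (Finset V) := Finset.univ.image e with hT0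
  have hT0card : T0.card = b := by
    rw [hT0, Finset.card_image_of_injective _ he, Finset.card_univ, ZMod.card]
  have hT0S : T0 ⊆ S := by
    intro t ht
    rw [hT0, Finset.mem_image] at ht
    obtain ⟨i, _, rfl⟩ := ht
    exact heS i
  have hT0U : (T0.biUnion id).card ≤ b * (r - 1) := by
    have hsub : T0.biUnion id ⊆ Finset.univ.biUnion (fun i => e i \ {v i}) := by
      intro x hx
      rw [Finset.mem_biUnion] at hx
      obtain ⟨t, ht, hxt⟩ := hx
      rw [hT0, Finset.mem_image] at ht
      obtain ⟨i, _, rfl⟩ := ht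
      rw [Finset.mem_biUnion]
      by_cases hxv : ∃ j, v j = x
      · obtain ⟨j, rfl⟩ := hxv
        refine ⟨j + 1, Finset.mem_univ _, ?_⟩
        rw [Finset.mem_sdiff, Finset.mem_singleton]
        refine ⟨(hev j).2, fun h => ?_⟩
        have hj := hv h
        have h0 : (0 : ZMod b) = 1 := by
          have := congrArg (· - j) hj
          simpa using this
        exact one_ne_zero h0.symm
      · refine ⟨i, Finset.mem_univ _, ?_⟩
        rw [Finset.mem_sdiff, Finset.mem_singleton]
        exact ⟨hxt, fun h => hxv ⟨i, h.symm⟩⟩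
    calc (T0.biUnion id).card ≤ (Finset.univ.biUnion (fun i => e i \ {v i})).card :=
          Finset.card_le_card hsub
      _ ≤ ∑ i : ZMod b, (e i \ {v i}).card := Finset.card_biUnion_le
      _ ≤ ∑ _i : ZMod b, (r - 1) := by
          refine Finset.sum_le_sum fun i _ => ?_
          have h1 : (e i \ {v i}).card = (e i).card - 1 := by
            rw [Finset.card_sdiff_of_subset (by simpa using (hev i).1)]
            simp
          rw [h1, hunif _ (hS (heS i))]
      _ = b * (r - 1) := by
          rw [Finset.sum_const, Finset.card_univ, ZMod.card, smul_eq_mul]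
  have grow : ∀ k, b ≤ k → k ≤ S.card →
      ∃ T, T ⊆ S ∧ T.card = k ∧ (T.biUnion id).card ≤ k * (r - 1) := by
    intro k
    induction k with
    | zero => omega
    | succ n ih =>
      intro hbn hnS
      rcases eq_or_lt_of_le hbn with hbeq | hblt
      · exact ⟨T0, hT0S, by rw [hT0card, hbeq], by rw [← hbeq]; exact hT0U⟩
      · obtain ⟨T, hTS, hTc, hTU⟩ := ih (by omega) (by omega)
        have hTneS : T ≠ S := fun h => by rw [h] at hTc; omega
        have hTne : T.Nonempty := Finset.card_pos.mp (by omega)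
        obtain ⟨x, hx⟩ := hconn T hTS hTne hTneS
        rw [Finset.mem_inter, Finset.mem_biUnion] at hx
        obtain ⟨⟨t, htT, hxt⟩, hf⟩ := hx
        rw [Finset.mem_biUnion] at hf
        obtain ⟨f, hfS, hxf⟩ := hf
        rw [Finset.mem_sdiff] at hfS
        refine ⟨insert f T, Finset.insert_subset hfS.1 hTS, ?_, ?_⟩
        · rw [Finset.card_insert_of_notMem hfS.2, hTc]
        · have hbU : (insert f T).biUnion id = f ∪ T.biUnion id := by
            simp [Finset.biUnion_insert]
          rw [hbU]
          have hxU : x ∈ f ∩ T.biUnion id := by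
            rw [Finset.mem_inter, Finset.mem_biUnion]
            exact ⟨hxf, t, htT, hxt⟩
          have h1 : (f ∩ T.biUnion id).card ≥ 1 :=
            Finset.card_pos.mpr ⟨x, hxU⟩
          have h2 := Finset.card_union_add_card_inter f (T.biUnion id)
          have hfr : f.card = r := hunif _ (hS hfS.1)
          have : (f ∪ T.biUnion id).card ≤ r - 1 + (T.biUnion id).card := by omega
          calc (f ∪ T.biUnion id).card ≤ r - 1 + (T.biUnion id).card := this
            _ ≤ r - 1 + n * (r - 1) := by omega
            _ = (n + 1) * (r - 1) := by ring
  obtain ⟨T, hTS, hTc, hTU⟩ := grow κ hbκ hlt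
  have hcard := hcond (T.biUnion id) hTU
  have hsub : T ⊆ E.filter (fun e => e ⊆ T.biUnion id) := by
    intro t ht
    rw [Finset.mem_filter]
    exact ⟨hS (hTS ht), fun x hx => Finset.mem_biUnion.mpr ⟨t, ht, hx⟩⟩
  have := Finset.card_le_card hsub
  omega
end
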